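/- arXiv:1807.02765 — 3 statements merged into one kernel-verified Lean document; each statement's English description precedes it below -/
import Mathlib

section
/- For 0 < a < 1, the integral of f_K(x;a) over the interval (-a, a) equals 1, i.e., ∫_{-a}^{a} sqrt(1-a^2) / (π (1-x^2) sqrt(a^2-x^2)) dx = 1. -/
/-!
On `(-a, a)` the density has the antiderivative `arcsin (√(1 - a²) x / (a √(1 - x²))) / π`,
which extends continuously to `±a` with values `±1/2`. Since the density is nonnegative, it is
automatically integrable as the derivative of a function continuous on `[-a, a]`, and the
fundamental theorem of calculus gives the value `1`.
-/

noncomputable def fK (x a : ℝ) : ℝ :=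
  Real.sqrt (1 - a^2) / (Real.pi * (1 - x^2) * Real.sqrt (a^2 - x^2))

open Real Set

noncomputable def konnoArg (a y : ℝ) : ℝ := √(1 - a ^ 2) * y / (a * √(1 - y ^ 2))

noncomputable def konnoPrimitive (a y : ℝ) : ℝ := arcsin (konnoArg a y) / π

lemma fK_nonneg {x : ℝ} (a : ℝ) (hx : x ^ 2 ≤ 1) : 0 ≤ fK x a :=
  div_nonneg (sqrt_nonneg _)
    (mul_nonneg (mul_nonneg pi_pos.le (by linarith)) (sqrt_nonneg _))

lemma konnoArg_neg (a y : ℝ) : konnoArg a (-y) = -konnoArg a y := by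
  simp only [konnoArg, neg_sq]; ring

section

variable {a : ℝ}

lemma konnoArg_self (ha0 : 0 < a) (ha1 : a < 1) : konnoArg a a = 1 := by
  have : 0 < √(1 - a ^ 2) := sqrt_pos.2 (by nlinarith)
  rw [konnoArg]; field_simp

lemma one_sub_konnoArg_sq (ha0 : 0 < a) (ha1 : a ≤ 1) {y : ℝ} (hy : y ^ 2 < 1) :
    1 - konnoArg a y ^ 2 = (a ^ 2 - y ^ 2) / (a ^ 2 * (1 - y ^ 2)) := by
  have hy' : 0 < 1 - y ^ 2 := by linarith
  rw [konnoArg, div_pow, mul_pow, mul_pow, sq_sqrt (by nlinarith), sq_sqrt hy'.le]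
  field_simp
  ring

lemma abs_konnoArg_lt_one (ha1 : a ≤ 1) {y : ℝ} (hy : |y| < a) : |konnoArg a y| < 1 := by
  have ha0 : 0 < a := (abs_nonneg y).trans_lt hy
  have hya : y ^ 2 < a ^ 2 := sq_lt_sq' (abs_lt.1 hy).1 (abs_lt.1 hy).2
  have hy1 : y ^ 2 < 1 := by nlinarith
  rw [← sq_lt_one_iff_abs_lt_one, ← sub_pos, one_sub_konnoArg_sq ha0 ha1 hy1]
  have : 0 < 1 - y ^ 2 := by linarith
  have : 0 < a ^ 2 - y ^ 2 := by linarith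
  positivity

lemma hasDerivAt_konnoArg (ha0 : a ≠ 0) {y : ℝ} (hy : y ^ 2 < 1) :
    HasDerivAt (konnoArg a) (√(1 - a ^ 2) / (a * (1 - y ^ 2) * √(1 - y ^ 2))) y := by
  have hy' : 0 < 1 - y ^ 2 := by linarith
  have hroot : HasDerivAt (fun y : ℝ => √(1 - y ^ 2)) (-y / √(1 - y ^ 2)) y := by
    convert ((hasDerivAt_pow 2 y).const_sub 1).sqrt hy'.ne' using 1
    field_simp; ring
  refine (((hasDerivAt_id' y).const_mul √(1 - a ^ 2)).fun_div (hroot.const_mul a)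
    (by positivity)).congr_deriv ?_
  field_simp
  rw [sq_sqrt hy'.le]
  ring

lemma hasDerivAt_konnoPrimitive (ha1 : a < 1) {x : ℝ} (hx : |x| < a) :
    HasDerivAt (konnoPrimitive a) (fK x a) x := by
  have ha0 : 0 < a := (abs_nonneg x).trans_lt hx
  have hxa : x ^ 2 < a ^ 2 := sq_lt_sq' (abs_lt.1 hx).1 (abs_lt.1 hx).2
  have hx1 : x ^ 2 < 1 := by nlinarith
  have hv := abs_konnoArg_lt_one ha1.le hx
  have hv1 : konnoArg a x ≠ 1 := fun h => by simp [h] at hv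
  have hvm1 : konnoArg a x ≠ -1 := fun h => by simp [h] at hv
  refine (((hasDerivAt_arcsin hvm1 hv1).comp x
    (hasDerivAt_konnoArg ha0.ne' hx1)).div_const π).congr_deriv ?_
  have h1x : 0 < 1 - x ^ 2 := by linarith
  have hax : 0 < a ^ 2 - x ^ 2 := by linarith
  have hroot : √(1 - konnoArg a x ^ 2) = √(a ^ 2 - x ^ 2) / (a * √(1 - x ^ 2)) := by
    rw [one_sub_konnoArg_sq ha0 ha1.le hx1, sqrt_div' _ (by positivity), sqrt_mul (sq_nonneg a),
      sqrt_sq ha0.le]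
  have : 0 < √(a ^ 2 - x ^ 2) := sqrt_pos.2 hax
  have : 0 < √(1 - x ^ 2) := sqrt_pos.2 h1x
  rw [hroot, fK]
  field_simp

lemma continuousOn_konnoPrimitive (ha0 : 0 < a) (ha1 : a < 1) :
    ContinuousOn (konnoPrimitive a) (Icc (-a) a) := by
  refine (continuous_arcsin.comp_continuousOn ?_).div_const π
  refine ContinuousOn.div (by fun_prop) (by fun_prop) fun x hx => ?_
  have : 0 < 1 - x ^ 2 := by nlinarith [hx.1, hx.2]
  positivity

lemma konnoPrimitive_self (ha0 : 0 < a) (ha1 : a < 1) : konnoPrimitive a a = 1 / 2 := by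
  rw [konnoPrimitive, konnoArg_self ha0 ha1, arcsin_one]
  field_simp

lemma konnoPrimitive_neg_self (ha0 : 0 < a) (ha1 : a < 1) :
    konnoPrimitive a (-a) = -(1 / 2) := by
  rw [konnoPrimitive, konnoArg_neg, arcsin_neg, neg_div, ← konnoPrimitive,
    konnoPrimitive_self ha0 ha1]

end

theorem konno_density_integral_one (a : ℝ) (ha0 : 0 < a) (ha1 : a < 1) :
    ∫ x in (-a)..a, fK x a = 1 := by
  have hle : -a ≤ a := by linarith
  have hcont := continuousOn_konnoPrimitive ha0 ha1
  have hderiv : ∀ x ∈ Ioo (-a) a, HasDerivAt (konnoPrimitive a) (fK x a) x :=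
    fun x hx => hasDerivAt_konnoPrimitive ha1 (abs_lt.2 hx)
  have hint : IntervalIntegrable (fun x => fK x a) MeasureTheory.volume (-a) a :=
    (intervalIntegrable_iff_integrableOn_Ioc_of_le hle).2 <|
      intervalIntegral.integrableOn_deriv_of_nonneg hcont hderiv fun x hx =>
        fK_nonneg a (by nlinarith [hx.1, hx.2])
  rw [intervalIntegral.integral_eq_sub_of_hasDerivAt_of_le hle hcont hderiv hint,
    konnoPrimitive_self ha0 ha1, konnoPrimitive_neg_self ha0 ha1]
  norm_num
end

section
/- For 0 < a < 1, the quantity N(a) = (π a^2 - 2a sqrt(1-a^2) + 2(1-2a^2) arcsin(a)) / (π (1-a^2)) satisfies 0 < N(a) < 1. -/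
/-!
Write `f` for the numerator of `N`. Then `f 0 = f 1 = 0` and `f' a = 2a(π - 4 arcsin a)`, which is
positive below `sin (π / 4)` and negative above it, so `f > 0` on `(0, 1)`. Likewise the gap
`π(1 - a²) - f a` to the denominator vanishes at `1` and has derivative `-4a(π - 2 arcsin a) < 0`,
so it is positive on `(0, 1)`.
-/

noncomputable def N (a : ℝ) : ℝ :=
  (Real.pi * a^2 - 2*a*Real.sqrt (1 - a^2) + 2*(1 - 2*a^2) * Real.arcsin a) /
    (Real.pi * (1 - a^2))

open Real Set

lemma pos_of_hasDerivAt_pos_then_neg {f f' : ℝ → ℝ} {a b c x : ℝ}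
    (hf : ContinuousOn f (Icc a b)) (hfa : 0 ≤ f a) (hfb : 0 ≤ f b)
    (hderiv : ∀ y ∈ Ioo a b, HasDerivAt f (f' y) y)
    (hpos : ∀ y ∈ Ioo a c, 0 < f' y) (hneg : ∀ y ∈ Ioo c b, f' y < 0) (hx : x ∈ Ioo a b) :
    0 < f x := by
  obtain ⟨hax, hxb⟩ := hx
  rcases le_or_gt x c with hxc | hcx
  · have hmono : StrictMonoOn f (Icc a x) := by
      refine strictMonoOn_of_hasDerivWithinAt_pos (convex_Icc a x)
        (hf.mono (Icc_subset_Icc_right hxb.le)) (fun y hy => ?_) (fun y hy => ?_) (f' := f')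
      all_goals rw [interior_Icc] at hy
      · exact (hderiv y ⟨hy.1, hy.2.trans hxb⟩).hasDerivWithinAt
      · exact hpos y ⟨hy.1, hy.2.trans_le hxc⟩
    exact hfa.trans_lt (hmono (left_mem_Icc.2 hax.le) (right_mem_Icc.2 hax.le) hax)
  · have hanti : StrictAntiOn f (Icc x b) := by
      refine strictAntiOn_of_hasDerivWithinAt_neg (convex_Icc x b)
        (hf.mono (Icc_subset_Icc_left hax.le)) (fun y hy => ?_) (fun y hy => ?_) (f' := f')
      all_goals rw [interior_Icc] at hy
      · exact (hderiv y ⟨hax.trans hy.1, hy.2⟩).hasDerivWithinAt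
      · exact hneg y ⟨hcx.trans hy.1, hy.2⟩
    exact hfb.trans_lt (hanti (left_mem_Icc.2 hxb.le) (right_mem_Icc.2 hxb.le) hxb)

noncomputable def survivalNumerator (a : ℝ) : ℝ :=
  π * a ^ 2 - 2 * a * √(1 - a ^ 2) + 2 * (1 - 2 * a ^ 2) * arcsin a

lemma N_eq_survivalNumerator_div (a : ℝ) :
    N a = survivalNumerator a / (π * (1 - a ^ 2)) := rfl

@[fun_prop]
lemma continuous_survivalNumerator : Continuous survivalNumerator := by
  unfold survivalNumerator; fun_prop

lemma survivalNumerator_zero : survivalNumerator 0 = 0 := by simp [survivalNumerator]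

lemma survivalNumerator_one : survivalNumerator 1 = 0 := by
  simp [survivalNumerator, arcsin_one]; ring

lemma hasDerivAt_survivalNumerator {a : ℝ} (h₁ : -1 < a) (h₂ : a < 1) :
    HasDerivAt survivalNumerator (2 * a * (π - 4 * arcsin a)) a := by
  have hpos : 0 < 1 - a ^ 2 := by nlinarith
  have hsqrt : HasDerivAt (fun x => √(1 - x ^ 2)) (-(2 * a) / (2 * √(1 - a ^ 2))) a := by
    refine HasDerivAt.sqrt ?_ hpos.ne'
    simpa using (hasDerivAt_pow 2 a).const_sub 1
  have harcsin : HasDerivAt arcsin (1 / √(1 - a ^ 2)) a :=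
    hasDerivAt_arcsin h₁.ne' h₂.ne
  have h := (((hasDerivAt_pow 2 a).const_mul π).sub
    (((hasDerivAt_id a).const_mul 2).mul hsqrt)).add
    ((((hasDerivAt_pow 2 a).const_mul 2).const_sub 1 |>.const_mul 2).mul harcsin)
  refine h.congr_deriv ?_
  have hs : √(1 - a ^ 2) ^ 2 = 1 - a ^ 2 := sq_sqrt hpos.le
  have hs0 : √(1 - a ^ 2) ≠ 0 := (sqrt_pos.2 hpos).ne'
  simp only [id, Nat.cast_ofNat, Nat.add_one_sub_one, pow_one]
  field_simp
  linear_combination -hs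

lemma survivalNumerator_pos {a : ℝ} (h₀ : 0 < a) (h₁ : a < 1) : 0 < survivalNumerator a := by
  refine pos_of_hasDerivAt_pos_then_neg continuous_survivalNumerator.continuousOn
    survivalNumerator_zero.ge survivalNumerator_one.ge
    (fun y hy => hasDerivAt_survivalNumerator (by linarith [hy.1]) hy.2)
    (c := sin (π / 4)) (fun y hy => ?_) (fun y hy => ?_) ⟨h₀, h₁⟩
  · have hy1 : y < 1 := hy.2.trans_le (sin_le_one _)
    have : arcsin y < π / 4 := by
      rw [arcsin_lt_iff_lt_sin ⟨by linarith [hy.1], hy1.le⟩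
        ⟨by linarith [pi_pos], by linarith [pi_pos]⟩]
      exact hy.2
    nlinarith [hy.1]
  · have hy0 : 0 < y :=
      (sin_pos_of_pos_of_lt_pi (by positivity) (by linarith [pi_pos])).trans hy.1
    have : π / 4 < arcsin y := by
      rw [lt_arcsin_iff_sin_lt ⟨by linarith [pi_pos], by linarith [pi_pos]⟩ ⟨by linarith, hy.2.le⟩]
      exact hy.1
    nlinarith

lemma survivalNumerator_lt {a : ℝ} (h₀ : 0 < a) (h₁ : a < 1) :
    survivalNumerator a < π * (1 - a ^ 2) := by
  have hanti : StrictAntiOn (fun x => π * (1 - x ^ 2) - survivalNumerator x) (Icc 0 1) := by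
    refine strictAntiOn_of_hasDerivWithinAt_neg (convex_Icc 0 1) (by fun_prop) (fun x hx => ?_)
      (fun x hx => ?_) (f' := fun x => -(4 * x * (π - 2 * arcsin x)))
    all_goals rw [interior_Icc] at hx
    · refine HasDerivAt.hasDerivWithinAt ?_
      have h := (((hasDerivAt_pow 2 x).const_sub 1).const_mul π).sub
        (hasDerivAt_survivalNumerator (by linarith [hx.1]) hx.2)
      refine h.congr_deriv ?_
      simp only [Nat.cast_ofNat, Nat.add_one_sub_one, pow_one]
      ring
    · have : arcsin x < π / 2 := arcsin_lt_pi_div_two.2 hx.2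
      nlinarith [hx.1]
  have := hanti ⟨h₀.le, h₁.le⟩ ⟨zero_le_one, le_rfl⟩ h₁
  simp only [one_pow, sub_self, mul_zero, survivalNumerator_one] at this
  linarith

theorem N_mem_Ioo (a : ℝ) (ha0 : 0 < a) (ha1 : a < 1) :
    0 < N a ∧ N a < 1 := by
  have hden : 0 < π * (1 - a ^ 2) := by
    have : 0 < 1 - a ^ 2 := by nlinarith
    positivity
  rw [N_eq_survivalNumerator_div]
  exact ⟨div_pos (survivalNumerator_pos ha0 ha1) hden,
    (div_lt_one hden).2 (survivalNumerator_lt ha0 ha1)⟩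
end

section
/- For 0 < a < 1, ∫_0^a x²/((1-x²)√(a²-x²)) dx = (π/2)(1/√(1-a²) - 1). -/
open Real Filter MeasureTheory intervalIntegral Set Topology

theorem aux_integral_xsq (a : ℝ) (ha0 : 0 < a) (ha1 : a < 1) :
    ∫ x in (0:ℝ)..a, x^2 / ((1 - x^2) * Real.sqrt (a^2 - x^2)) =
      (Real.pi / 2) * (1 / Real.sqrt (1 - a^2) - 1) := by
  set c := Real.sqrt (1 - a^2) with hc_def
  have h1a : (0:ℝ) < 1 - a^2 := by nlinarith
  have hc0 : 0 < c := Real.sqrt_pos.mpr h1a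
  have hc2 : c^2 = 1 - a^2 := Real.sq_sqrt h1a.le
  set F : ℝ → ℝ := fun x => (1/c) * Real.arctan (x * c / Real.sqrt (a^2 - x^2))
      - Real.arcsin (x/a) with hF
  -- derivative of F on Ioo 0 a
  have hderiv : ∀ x ∈ Ioo (0:ℝ) a,
      HasDerivAt F (x^2 / ((1 - x^2) * Real.sqrt (a^2 - x^2))) x := by
    intro x hx
    obtain ⟨hx0, hxa⟩ := hx
    have hax2 : 0 < a^2 - x^2 := by nlinarith
    have hs0 : 0 < Real.sqrt (a^2 - x^2) := Real.sqrt_pos.mpr hax2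
    set s := Real.sqrt (a^2 - x^2) with hs_def
    have hs2 : s^2 = a^2 - x^2 := Real.sq_sqrt hax2.le
    have hx1 : x < 1 := hxa.trans ha1
    have h1x2 : 0 < 1 - x^2 := by nlinarith
    have hsq : HasDerivAt (fun y : ℝ => Real.sqrt (a^2 - y^2)) ((1/(2*s)) * (-(2*x))) x := by
      have h1 : HasDerivAt (fun y : ℝ => a^2 - y^2) (-(2*x)) x := by
        simpa using ((hasDerivAt_pow 2 x).const_sub (a^2))
      exact (Real.hasDerivAt_sqrt hax2.ne').comp x h1
    have hnum : HasDerivAt (fun y : ℝ => y * c) c x := by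
      simpa using (hasDerivAt_id x).mul_const c
    have hg : HasDerivAt (fun y : ℝ => y * c / Real.sqrt (a^2 - y^2))
        ((c * s - (x*c) * ((1/(2*s)) * (-(2*x)))) / s^2) x := hnum.div hsq hs0.ne'
    have harctan : HasDerivAt (fun y : ℝ => Real.arctan (y * c / Real.sqrt (a^2 - y^2)))
        ((1 / (1 + (x * c / s)^2)) * ((c * s - (x*c) * ((1/(2*s)) * (-(2*x)))) / s^2)) x :=
      (Real.hasDerivAt_arctan _).comp x hg
    have harcsin : HasDerivAt (fun y : ℝ => Real.arcsin (y / a))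
        ((1 / Real.sqrt (1 - (x/a)^2)) * (1/a)) x := by
      have hq0 : 0 < x / a := div_pos hx0 ha0
      have hq1 : x / a < 1 := (div_lt_one ha0).mpr hxa
      have h1 : HasDerivAt (fun y : ℝ => y / a) (1/a) x := by
        simpa using (hasDerivAt_id x).div_const a
      exact (Real.hasDerivAt_arcsin (by linarith) (by linarith)).comp x h1
    have hF' := ((harctan.const_mul (1/c)).sub harcsin)
    convert hF' using 1
    · rfl
    · rfl
    · rfl
    have hsr : Real.sqrt (1 - (x/a)^2) = s / a := by
      rw [show 1 - (x/a)^2 = (a^2 - x^2)/a^2 by field_simp]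
      rw [Real.sqrt_div hax2.le, Real.sqrt_sq ha0.le]
    have hden : 1 + (x * c / s)^2 = a^2 * (1 - x^2) / s^2 := by
      field_simp
      linear_combination hs2 + x^2 * hc2
    have e1 : c * s - (x*c) * ((1/(2*s)) * (-(2*x))) = c * a^2 / s := by
      field_simp
      linear_combination hs2
    rw [hsr, hden, e1]
    field_simp
    ring
  -- integrability
  have hint : IntervalIntegrable (fun x => x^2 / ((1 - x^2) * Real.sqrt (a^2 - x^2)))
      volume 0 a := by
    have hrint : IntervalIntegrable (fun x : ℝ => x ^ (-(1/2) : ℝ)) volume 0 a :=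
      intervalIntegrable_rpow' (by norm_num)
    have hrint2 : IntervalIntegrable (fun x : ℝ => (a - x) ^ (-(1/2) : ℝ)) volume 0 a := by
      simpa using (hrint.comp_sub_left a).symm
    set C : ℝ := a^2 / ((1 - a^2) * Real.sqrt a) with hC
    have hCpos : 0 < C := by
      apply div_pos (by positivity)
      exact mul_pos h1a (Real.sqrt_pos.mpr ha0)
    refine (hrint2.const_mul C).mono_fun' ?_ ?_
    · apply Measurable.aestronglyMeasurable
      fun_prop
    · rw [uIoc_of_le ha0.le]
      filter_upwards [ae_restrict_mem measurableSet_Ioc] with x hx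
      obtain ⟨hx0, hxa⟩ := hx
      rcases hxa.eq_or_lt with heq | hlt
      · subst heq
        simp [Real.zero_rpow]
      · have haxpos : 0 < a - x := by linarith
        have hx1 : x < 1 := hlt.trans ha1
        have h1x2 : 0 < 1 - x^2 := by nlinarith
        have hax2 : 0 < a^2 - x^2 := by nlinarith
        have hs0 : 0 < Real.sqrt (a^2 - x^2) := Real.sqrt_pos.mpr hax2
        have hfpos : 0 ≤ x^2 / ((1 - x^2) * Real.sqrt (a^2 - x^2)) := by positivity
        rw [Real.norm_eq_abs, abs_of_nonneg hfpos]
        have hrw : (a - x) ^ (-(1/2) : ℝ) = 1 / Real.sqrt (a - x) := by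
          rw [Real.rpow_neg haxpos.le, ← Real.sqrt_eq_rpow, one_div]
        rw [hrw]
        have hsax : 0 < Real.sqrt (a - x) := Real.sqrt_pos.mpr haxpos
        have hsa : 0 < Real.sqrt a := Real.sqrt_pos.mpr ha0
        have hRHS : C * (1 / Real.sqrt (a - x)) =
            a^2 / ((1 - a^2) * Real.sqrt a * Real.sqrt (a - x)) := by
          rw [hC]; field_simp
        rw [hRHS]
        apply div_le_div₀ (by positivity) (by nlinarith) (by positivity)
        -- (1-a^2) * √a * √(a-x) ≤ (1-x^2) * √(a^2-x^2)
        have h1 : Real.sqrt a * Real.sqrt (a - x) ≤ Real.sqrt (a^2 - x^2) := by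
          rw [← Real.sqrt_mul ha0.le]
          apply Real.sqrt_le_sqrt
          nlinarith
        have h2 : (1 - a^2) ≤ (1 - x^2) := by nlinarith
        calc (1 - a^2) * Real.sqrt a * Real.sqrt (a - x)
            = (1 - a^2) * (Real.sqrt a * Real.sqrt (a - x)) := by ring
          _ ≤ (1 - x^2) * Real.sqrt (a^2 - x^2) := by
              apply mul_le_mul h2 h1 (by positivity) h1x2.le
  -- limits at the endpoints
  have h0 : Tendsto F (𝓝[>] (0:ℝ)) (𝓝 0) := by
    have hFc : ContinuousAt F 0 := by
      apply ContinuousAt.sub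
      · apply ContinuousAt.mul continuousAt_const
        apply Real.continuous_arctan.continuousAt.comp
        apply ContinuousAt.div (by fun_prop) (by fun_prop)
        simp [Real.sqrt_sq ha0.le, ha0.ne']
      · exact Real.continuous_arcsin.continuousAt.comp (by fun_prop)
    have hF0 : F 0 = 0 := by simp [hF]
    simpa [hF0] using hFc.tendsto.mono_left nhdsWithin_le_nhds
  have hIoo : Ioo (0:ℝ) a ∈ 𝓝[<] a := Ioo_mem_nhdsLT_of_mem ⟨ha0, le_refl a⟩
  have ha' : Tendsto F (𝓝[<] a) (𝓝 ((1/c) * (Real.pi/2) - Real.pi/2)) := by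
    apply Tendsto.sub
    · apply Tendsto.const_mul
      have hinner : Tendsto (fun x => x * c / Real.sqrt (a^2 - x^2)) (𝓝[<] a) atTop := by
        have h1 : Tendsto (fun x : ℝ => x * c) (𝓝[<] a) (𝓝 (a * c)) := by
          exact ((continuous_id.mul continuous_const).continuousAt.tendsto).mono_left
            nhdsWithin_le_nhds
        have h2 : Tendsto (fun x : ℝ => Real.sqrt (a^2 - x^2)) (𝓝[<] a) (𝓝[>] 0) := by
          rw [tendsto_nhdsWithin_iff]
          constructor
          · have hcont : Continuous fun x : ℝ => Real.sqrt (a^2 - x^2) := by fun_prop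
            have := hcont.continuousAt (x := a)
            simpa using this.tendsto.mono_left nhdsWithin_le_nhds
          · filter_upwards [hIoo] with x hx
            have : 0 < a^2 - x^2 := by nlinarith [hx.1, hx.2]
            exact Real.sqrt_pos.mpr this
        have h3 := h2.inv_tendsto_nhdsGT_zero
        have := Filter.Tendsto.pos_mul_atTop (mul_pos ha0 hc0) h1 h3
        simpa [div_eq_mul_inv] using this
      exact (Real.tendsto_arctan_atTop.comp hinner).mono_right nhdsWithin_le_nhds
    · have : Tendsto (fun x => Real.arcsin (x / a)) (𝓝[<] a) (𝓝 (Real.arcsin (a / a))) := by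
        exact ((Real.continuous_arcsin.comp (continuous_id.div_const a)).continuousAt.tendsto).mono_left
          nhdsWithin_le_nhds
      rwa [div_self ha0.ne', Real.arcsin_one] at this
  rw [intervalIntegral.integral_eq_sub_of_hasDerivAt_of_tendsto ha0 hderiv hint h0 ha']
  ring
end
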